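/- Let σ be the concatenation C ++ α ++ β ++ D of pairwise disjoint sequences of distinct locations, and let σ' = C ++ β ++ α ++ D, where π(α) ≠ 1 and π(β) ≠ 1. Then P(x,σ) − P(x,σ') = π(C)·(1−π(α))·(1−π(β))·(I(α) − I(β)). Consequently P(x,σ) ≥ P(x,σ') if and only if I(α) ≥ I(β), with P(x,σ) = P(x,σ') if and only if I(α) = I(β). -/
import Mathlib


/-- `P(x,α) = Σ_{t=1}^m x(a_t) ∏_{s=1}^t p(a_s)` for a sequence `α = (a_1,…,a_m)`. -/
def listP {V : Type*} (x p : V → ℝ) : List V → ℝ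
  | [] => 0
  | a :: l => p a * (x a + listP x p l)

/-- `π(α) = ∏_{t=1}^m p(a_t)`. -/
def listPi {V : Type*} (p : V → ℝ) (α : List V) : ℝ :=
  (α.map p).prod

/-- The index `I(α) = P(x,α)/(1−π(α))` of a subsearch `α`. -/
noncomputable def idx {V : Type*} (x p : V → ℝ) (α : List V) : ℝ :=
  listP x p α / (1 - listPi p α)

lemma listPi_cons {V : Type*} (p : V → ℝ) (a : V) (l : List V) :
    listPi p (a :: l) = p a * listPi p l := by simp [listPi]

lemma listPi_append {V : Type*} (p : V → ℝ) (l m : List V) :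
    listPi p (l ++ m) = listPi p l * listPi p m := by simp [listPi]

lemma listP_append {V : Type*} (x p : V → ℝ) (l m : List V) :
    listP x p (l ++ m) = listP x p l + listPi p l * listP x p m := by
  induction l with
  | nil => simp [listP, listPi]
  | cons a l ih => simp [listP, listPi_cons, ih]; ring

lemma listPi_pos {V : Type*} (p : V → ℝ) (hp : ∀ v, 0 < p v ∧ p v ≤ 1) (l : List V) :
    0 < listPi p l := by
  induction l with
  | nil => simp [listPi]
  | cons a l ih => rw [listPi_cons]; exact mul_pos (hp a).1 ih

lemma listPi_le_one {V : Type*} (p : V → ℝ) (hp : ∀ v, 0 < p v ∧ p v ≤ 1) (l : List V) :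
    listPi p l ≤ 1 := by
  induction l with
  | nil => simp [listPi]
  | cons a l ih =>
      rw [listPi_cons]
      calc p a * listPi p l ≤ 1 * 1 :=
        mul_le_mul (hp a).2 ih (listPi_pos p hp l).le zero_le_one
      _ = 1 := one_mul 1

/-- Search Density Lemma: if `σ = C ++ α ++ β ++ D` and
`σ' = C ++ β ++ α ++ D`, with `π(α), π(β) ≠ 1`, then
`P(x,σ) − P(x,σ') = π(C)(1−π(α))(1−π(β))(I(α) − I(β))`; consequently
`P(x,σ) ≥ P(x,σ')` iff `I(α) ≥ I(β)`, with equality iff `I(α) = I(β)`. -/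
theorem search_density_lemma
    {V : Type*} [Fintype V] [DecidableEq V]
    (p : V → ℝ) (hp : ∀ v, 0 < p v ∧ p v ≤ 1)
    (x : V → ℝ) (hx : ∀ v, 0 ≤ x v ∧ x v ≤ 1) (hxsum : ∑ v, x v = 1)
    (C α β D : List V)
    (hnodup : (C ++ α ++ β ++ D).Nodup)
    (hcover : ∀ v : V, v ∈ C ++ α ++ β ++ D)
    (hα : listPi p α ≠ 1) (hβ : listPi p β ≠ 1) :
    listP x p (C ++ α ++ β ++ D) - listP x p (C ++ β ++ α ++ D) =
      listPi p C * (1 - listPi p α) * (1 - listPi p β) * (idx x p α - idx x p β) ∧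
    (listP x p (C ++ β ++ α ++ D) ≤ listP x p (C ++ α ++ β ++ D) ↔ idx x p β ≤ idx x p α) ∧
    (listP x p (C ++ α ++ β ++ D) = listP x p (C ++ β ++ α ++ D) ↔ idx x p α = idx x p β) := by
  have hαpos : 0 < 1 - listPi p α :=
    lt_of_le_of_ne (sub_nonneg.mpr (listPi_le_one p hp α)) (by intro h; exact hα (by linarith))
  have hβpos : 0 < 1 - listPi p β :=
    lt_of_le_of_ne (sub_nonneg.mpr (listPi_le_one p hp β)) (by intro h; exact hβ (by linarith))
  have hCpos : 0 < listPi p C := listPi_pos p hp C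
  have key : listP x p (C ++ α ++ β ++ D) - listP x p (C ++ β ++ α ++ D) =
      listPi p C * (1 - listPi p α) * (1 - listPi p β) * (idx x p α - idx x p β) := by
    simp only [listP_append, listPi_append, idx]
    field_simp
    ring
  have hfac : 0 < listPi p C * (1 - listPi p α) * (1 - listPi p β) :=
    mul_pos (mul_pos hCpos hαpos) hβpos
  refine ⟨key, ?_, ?_⟩
  · rw [← sub_nonneg, key, mul_nonneg_iff_of_pos_left hfac, sub_nonneg]
  · rw [← sub_eq_zero, key]
    constructor
    · intro h
      have := mul_eq_zero.mp h
      rcases this with h1 | h2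
      · exact absurd h1 (ne_of_gt hfac)
      · linarith [sub_eq_zero.mp h2]
    · intro h; rw [h]; ring
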